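/- Consider agents with damped dynamics ẋ^i = v^i, m_i v̇^i = u^i - k_i v^i with k_i > 0, and control u^i = -∑_{j∈N_i} w_{ij}(v^i - v^j) - ∑_{j≠i} ∇_{x^i} V^{ij}. Then along solutions, the energy J = (1/2)∑_i (V^i + m_i ‖v^i‖²) satisfies dJ/dt = -(1/2) v^T ((L+L^T) ⊗ I_n) v - v^T (H ⊗ I_n) v ≤ -min_i(k_i) ‖v‖², where H = diag(k_1,...,k_N); in particular dJ/dt = 0 implies v = 0. -/

import Mathlib

/-!
Along solutions, the pairwise potential forces are antisymmetric, so they do no net work and the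
energy `J` changes exactly at the rate of the power `∑ᵢ vⁱ·(-(L v)ⁱ - kᵢ vⁱ)` of the consensus and
damping forces. Coordinatewise this power is `-(1/2) vᵀ((L + Lᵀ) ⊗ Iₙ)v - vᵀ(H ⊗ Iₙ)v`. Weight
balance makes `vᵀ L v = (1/2) ∑ᵢⱼ wᵢⱼ ‖vⁱ - vʲ‖²` nonnegative, so `dJ/dt ≤ -vᵀ(H ⊗ Iₙ)v`, which is
at most `-minᵢ kᵢ ‖v‖²` and, since `H ⊗ Iₙ` is positive definite, vanishes only at `v = 0`.
-/

open Matrix BigOperators Kronecker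

section QuadraticForms

variable {ι κ : Type*} [Fintype ι] [Fintype κ]

lemma dotProduct_kronecker_one_mulVec {R : Type*} [CommSemiring R] [DecidableEq κ]
    (A : Matrix ι ι R) (x : ι × κ → R) :
    x ⬝ᵥ ((A ⊗ₖ (1 : Matrix κ κ R)) *ᵥ x)
      = ∑ c, (fun i => x (i, c)) ⬝ᵥ (A *ᵥ fun i => x (i, c)) := by
  simp only [dotProduct, mulVec, Fintype.sum_prod_type, kroneckerMap_apply, one_apply,
    mul_ite, mul_one, mul_zero, ite_mul, zero_mul, Finset.sum_ite_eq, Finset.mem_univ, if_true]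
  rw [Finset.sum_comm]

lemma dotProduct_add_transpose_mulVec {R : Type*} [CommSemiring R] (A : Matrix ι ι R)
    (y : ι → R) : y ⬝ᵥ ((A + Aᵀ) *ᵥ y) = 2 * (y ⬝ᵥ (A *ᵥ y)) := by
  rw [add_mulVec, dotProduct_add, dotProduct_mulVec y Aᵀ, vecMul_transpose, dotProduct_comm,
    two_mul]

lemma neg_half_dotProduct_sub_dotProduct_diagonal_eq_sum [DecidableEq ι] [DecidableEq κ]
    (A : Matrix ι ι ℝ) (k : ι → ℝ) (x : ι × κ → ℝ) :
    -(1 / 2) * (x ⬝ᵥ (((A + Aᵀ) ⊗ₖ (1 : Matrix κ κ ℝ)) *ᵥ x))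
        - x ⬝ᵥ ((diagonal k ⊗ₖ (1 : Matrix κ κ ℝ)) *ᵥ x)
      = ∑ i, ∑ c, x (i, c) * (-(A *ᵥ fun j => x (j, c)) i - k i * x (i, c)) := by
  rw [dotProduct_kronecker_one_mulVec, dotProduct_kronecker_one_mulVec, Finset.sum_comm (γ := ι),
    Finset.mul_sum, ← Finset.sum_sub_distrib]
  refine Finset.sum_congr rfl fun c _ => ?_
  rw [dotProduct_add_transpose_mulVec]
  simp only [dotProduct, mulVec_diagonal, Finset.mul_sum, ← Finset.sum_sub_distrib]
  exact Finset.sum_congr rfl fun i _ => by ring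

lemma mul_dotProduct_self_le_dotProduct_diagonal_kronecker_one [DecidableEq ι] [DecidableEq κ]
    {k : ι → ℝ} {a : ℝ} (hk : ∀ i, a ≤ k i) (x : ι × κ → ℝ) :
    a * (x ⬝ᵥ x) ≤ x ⬝ᵥ ((diagonal k ⊗ₖ (1 : Matrix κ κ ℝ)) *ᵥ x) := by
  rw [← diagonal_one, diagonal_kronecker_diagonal]
  simp only [dotProduct, mulVec_diagonal, Finset.mul_sum, mul_one]
  exact Finset.sum_le_sum fun p _ => by nlinarith [hk p.1, mul_self_nonneg (x p)]

end QuadraticForms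

section Laplacian

variable {ι R : Type*} [Fintype ι] [DecidableEq ι]

/-- For `w` with zero diagonal this is the Laplacian `L` of the paper. -/
def weightedLaplacian [AddCommGroup R] (w : ι → ι → R) : Matrix ι ι R :=
  diagonal (fun i => ∑ j, w i j) - of w

lemma weightedLaplacian_mulVec_apply [CommRing R] (w : ι → ι → R) (y : ι → R) (i : ι) :
    (weightedLaplacian w *ᵥ y) i = ∑ j, w i j * (y i - y j) := by
  rw [weightedLaplacian, sub_mulVec, Pi.sub_apply, mulVec_diagonal, Finset.sum_mul]
  simp only [mulVec, dotProduct, of_apply, mul_sub, Finset.sum_sub_distrib]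

lemma two_mul_dotProduct_weightedLaplacian_mulVec [CommRing R] {w : ι → ι → R}
    (hbal : ∀ i, ∑ j, w i j = ∑ j, w j i) (y : ι → R) :
    2 * (y ⬝ᵥ (weightedLaplacian w *ᵥ y)) = ∑ i, ∑ j, w i j * (y i - y j) ^ 2 := by
  have hswap : ∑ i, ∑ j, w i j * y j ^ 2 = ∑ i, ∑ j, w i j * y i ^ 2 := by
    rw [Finset.sum_comm]
    simp only [← Finset.sum_mul, hbal]
  calc 2 * (y ⬝ᵥ (weightedLaplacian w *ᵥ y))
      = ∑ i, ∑ j, (w i j * (y i - y j) ^ 2 + w i j * y i ^ 2 - w i j * y j ^ 2) := by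
        simp only [dotProduct, weightedLaplacian_mulVec_apply, Finset.mul_sum]
        exact Finset.sum_congr rfl fun i _ => Finset.sum_congr rfl fun j _ => by ring
    _ = ∑ i, ∑ j, w i j * (y i - y j) ^ 2 := by
        simp only [Finset.sum_sub_distrib, Finset.sum_add_distrib, hswap, add_sub_cancel_right]

lemma posSemidef_weightedLaplacian_add_transpose {w : ι → ι → ℝ} (hw : ∀ i j, 0 ≤ w i j)
    (hbal : ∀ i, ∑ j, w i j = ∑ j, w j i) :
    (weightedLaplacian w + (weightedLaplacian w)ᵀ).PosSemidef := by
  refine .of_dotProduct_mulVec_nonneg ?_ fun y => ?_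
  · simpa [conjTranspose_eq_transpose_of_trivial] using
      isHermitian_add_transpose_self (weightedLaplacian w)
  · rw [star_trivial, dotProduct_add_transpose_mulVec,
      two_mul_dotProduct_weightedLaplacian_mulVec hbal]
    exact Finset.sum_nonneg fun i _ => Finset.sum_nonneg fun j _ =>
      mul_nonneg (hw i j) (sq_nonneg _)

end Laplacian

section Energy

variable {ι κ : Type*} [Fintype ι] [Fintype κ]

lemma sum_sum_mul_sub_of_antisymm {R : Type*} [CommRing R] {g : ι → ι → R}
    (hg : ∀ i j, g i j = -g j i) (y : ι → R) :
    ∑ i, ∑ j, g i j * (y i - y j) = 2 * ∑ i, y i * ∑ j, g i j := by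
  have hswap : ∑ i, ∑ j, g i j * y j = -∑ i, ∑ j, g i j * y i := by
    rw [Finset.sum_comm, ← Finset.sum_neg_distrib]
    exact Finset.sum_congr rfl fun i _ => by
      rw [← Finset.sum_neg_distrib]
      exact Finset.sum_congr rfl fun j _ => by rw [hg]; ring
  simp only [mul_sub, Finset.sum_sub_distrib, hswap, ← Finset.sum_mul, sub_neg_eq_add, ← two_mul]
  exact congrArg _ (Finset.sum_congr rfl fun i _ => mul_comm _ _)

lemma hasDerivAt_mul_sum_sq {m t : ℝ} (hm : m ≠ 0) {x : ℝ → κ → ℝ} {F : κ → ℝ}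
    (hx : ∀ c, HasDerivAt (fun s => x s c) (1 / m * F c) t) :
    HasDerivAt (fun s => m * ∑ c, x s c ^ 2) (2 * ∑ c, x t c * F c) t := by
  refine ((HasDerivAt.fun_sum fun c _ => (hx c).fun_pow 2).const_mul m).congr_deriv ?_
  simp only [Finset.mul_sum]
  refine Finset.sum_congr rfl fun c _ => ?_
  field_simp
  ring

lemma hasDerivAt_sum_pairPotential [DecidableEq ι] {V : ι → ι → ℝ → ℝ}
    {f : ι → ι → κ → ℝ} {v : ι → ℝ → κ → ℝ} {t : ℝ}
    (hf : ∀ i j c, f i j c = -f j i c)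
    (hV : ∀ i j, i ≠ j → HasDerivAt (V i j) (∑ c, f i j c * (v i t c - v j t c)) t) :
    HasDerivAt (fun s => ∑ i, ∑ j ∈ Finset.univ.erase i, V i j s)
      (2 * ∑ i, ∑ c, v i t c * ∑ j, f i j c) t := by
  refine (HasDerivAt.fun_sum fun i _ => HasDerivAt.fun_sum fun j hj =>
    hV i j (Finset.ne_of_mem_erase hj).symm).congr_deriv ?_
  have herase : ∀ i, ∑ j ∈ Finset.univ.erase i, ∑ c, f i j c * (v i t c - v j t c)
      = ∑ j, ∑ c, f i j c * (v i t c - v j t c) := fun i =>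
    Finset.sum_erase _ (by simp)
  calc ∑ i, ∑ j ∈ Finset.univ.erase i, ∑ c, f i j c * (v i t c - v j t c)
      = ∑ c, ∑ i, ∑ j, f i j c * (v i t c - v j t c) := by
        simp only [herase]
        conv_lhs => enter [2, i]; rw [Finset.sum_comm]
        rw [Finset.sum_comm]
    _ = 2 * ∑ i, ∑ c, v i t c * ∑ j, f i j c := by
        simp only [sum_sum_mul_sub_of_antisymm (fun i j => hf i j _), ← Finset.mul_sum]
        rw [Finset.sum_comm]

/-- Work–energy identity: `G` is the non-conservative part of the force. -/
lemma hasDerivAt_energy [DecidableEq ι] {m : ι → ℝ} (hm : ∀ i, m i ≠ 0)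
    {V : ι → ι → ℝ → ℝ} {f : ι → ι → κ → ℝ} {G : ι → κ → ℝ} {v : ι → ℝ → κ → ℝ} {t : ℝ}
    (hf : ∀ i j c, f i j c = -f j i c)
    (hV : ∀ i j, i ≠ j → HasDerivAt (V i j) (∑ c, f i j c * (v i t c - v j t c)) t)
    (hv : ∀ i c, HasDerivAt (fun s => v i s c) (1 / m i * (G i c - ∑ j, f i j c)) t) :
    HasDerivAt (fun s => 1 / 2 * ∑ i, ((∑ j ∈ Finset.univ.erase i, V i j s)
        + m i * ∑ c, v i s c ^ 2))
      (∑ i, ∑ c, v i t c * G i c) t := by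
  have hP := hasDerivAt_sum_pairPotential hf hV
  have hK := HasDerivAt.fun_sum fun i (_ : i ∈ Finset.univ) =>
    hasDerivAt_mul_sum_sq (hm i) (hv i)
  simp only [Finset.sum_add_distrib]
  refine ((hP.add hK).const_mul (1 / 2)).congr_deriv ?_
  simp only [mul_sub, Finset.sum_sub_distrib, ← Finset.mul_sum]
  ring

end Energy

theorem stmt_17_general (N n : ℕ) (m : Fin N → ℝ) (hm : ∀ i, 0 < m i)
    (k : Fin N → ℝ) (hk : ∀ i, 0 < k i)
    (w : Fin N → Fin N → ℝ) (hw : ∀ i j, 0 ≤ w i j) (hwd : ∀ i, w i i = 0)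
    (hbal : ∀ i, ∑ j, w i j = ∑ j, w j i)
    (L : Matrix (Fin N) (Fin N) ℝ)
    (hL : ∀ i j, L i j = if i = j then ∑ kk, w i kk else -(w i j))
    (v : Fin N → ℝ → Fin n → ℝ)
    (Vp : Fin N → Fin N → ℝ → ℝ)
    (f : Fin N → Fin N → ℝ → Fin n → ℝ)
    (hfa : ∀ i j t kk, f i j t kk = -(f j i t kk))
    (hVdyn : ∀ i j t, i ≠ j →
      HasDerivAt (Vp i j) (∑ kk, f i j t kk * (v i t kk - v j t kk)) t)
    (hdyn : ∀ i t kk, HasDerivAt (fun s => v i s kk)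
      ((1 / m i) * (-(∑ j, w i j * (v i t kk - v j t kk)) - (∑ j, f i j t kk)
        - k i * v i t kk)) t)
    (t : ℝ) :
    ∃ D : ℝ,
      D = -(1 / 2) * ((fun p : Fin N × Fin n => v p.1 t p.2) ⬝ᵥ
            (((L + Lᵀ) ⊗ₖ (1 : Matrix (Fin n) (Fin n) ℝ)) *ᵥ
              (fun p : Fin N × Fin n => v p.1 t p.2)))
          - ((fun p : Fin N × Fin n => v p.1 t p.2) ⬝ᵥ
            (((Matrix.diagonal k) ⊗ₖ (1 : Matrix (Fin n) (Fin n) ℝ)) *ᵥ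
              (fun p : Fin N × Fin n => v p.1 t p.2))) ∧
      HasDerivAt
        (fun s => (1 / 2) * ∑ i, ((∑ j ∈ Finset.univ.erase i, Vp i j s)
          + m i * ∑ kk, (v i s kk) ^ 2)) D t ∧
      (∀ i₀ : Fin N, (∀ i, k i₀ ≤ k i) →
        D ≤ -(k i₀) * ((fun p : Fin N × Fin n => v p.1 t p.2) ⬝ᵥ
          (fun p : Fin N × Fin n => v p.1 t p.2))) ∧
      (D = 0 → ∀ i kk, v i t kk = 0) := by
  have hLap : L = weightedLaplacian w := by
    ext i j
    rw [hL, weightedLaplacian, Matrix.sub_apply, of_apply, diagonal_apply]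
    split_ifs with hij
    · rw [hij, hwd, sub_zero]
    · rw [zero_sub]
  subst hLap
  set x : Fin N × Fin n → ℝ := fun p => v p.1 t p.2
  have hLapNonneg : 0 ≤ x ⬝ᵥ (((weightedLaplacian w + (weightedLaplacian w)ᵀ) ⊗ₖ
      (1 : Matrix (Fin n) (Fin n) ℝ)) *ᵥ x) := by
    simpa using ((posSemidef_weightedLaplacian_add_transpose hw hbal).kronecker
      PosSemidef.one).dotProduct_mulVec_nonneg x
  refine ⟨_, rfl, ?_, fun i₀ hi₀ => ?_, fun hD => ?_⟩
  · rw [neg_half_dotProduct_sub_dotProduct_diagonal_eq_sum]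
    refine hasDerivAt_energy (fun i => (hm i).ne') (fun i j => hfa i j t) (fun i j => hVdyn i j t)
      fun i c => (hdyn i t c).congr_deriv ?_
    rw [weightedLaplacian_mulVec_apply]
    ring
  · linarith [mul_dotProduct_self_le_dotProduct_diagonal_kronecker_one hi₀ x]
  · have hx : x = 0 := by
      by_contra hx
      have := ((posDef_diagonal_iff.mpr hk).kronecker PosDef.one).dotProduct_mulVec_pos hx
      rw [star_trivial] at this
      linarith
    exact fun i c => congrFun hx (i, c)

/-- With damping gains `kᵢ > 0` and dynamics
`mᵢ v̇ⁱ = uⁱ - kᵢ vⁱ`, the energy `J` satisfies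
`dJ/dt = -(1/2) vᵀ ((L + Lᵀ) ⊗ Iₙ) v - vᵀ (H ⊗ Iₙ) v ≤ -minᵢ(kᵢ) ‖v‖²`;
in particular `dJ/dt = 0` implies `v = 0`. -/
theorem stmt_17 (N n : ℕ) (m : Fin N → ℝ) (hm : ∀ i, 0 < m i)
    (k : Fin N → ℝ) (hk : ∀ i, 0 < k i)
    (w : Fin N → Fin N → ℝ) (hw : ∀ i j, 0 ≤ w i j) (hwd : ∀ i, w i i = 0)
    (hbal : ∀ i, ∑ j, w i j = ∑ j, w j i)
    (L : Matrix (Fin N) (Fin N) ℝ)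
    (hL : ∀ i j, L i j = if i = j then ∑ kk, w i kk else -(w i j))
    (v : Fin N → ℝ → Fin n → ℝ)
    (Vp : Fin N → Fin N → ℝ → ℝ)
    (f : Fin N → Fin N → ℝ → Fin n → ℝ)
    (hVsym : ∀ i j t, Vp i j t = Vp j i t)
    (hfa : ∀ i j t kk, f i j t kk = -(f j i t kk))
    (hfd : ∀ i t, f i i t = 0)
    (hVdyn : ∀ i j t, i ≠ j →
      HasDerivAt (Vp i j) (∑ kk, f i j t kk * (v i t kk - v j t kk)) t)
    (hdyn : ∀ i t kk, HasDerivAt (fun s => v i s kk)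
      ((1 / m i) * (-(∑ j, w i j * (v i t kk - v j t kk)) - (∑ j, f i j t kk)
        - k i * v i t kk)) t)
    (t : ℝ) :
    ∃ D : ℝ,
      D = -(1 / 2) * ((fun p : Fin N × Fin n => v p.1 t p.2) ⬝ᵥ
            (((L + Lᵀ) ⊗ₖ (1 : Matrix (Fin n) (Fin n) ℝ)) *ᵥ
              (fun p : Fin N × Fin n => v p.1 t p.2)))
          - ((fun p : Fin N × Fin n => v p.1 t p.2) ⬝ᵥ
            (((Matrix.diagonal k) ⊗ₖ (1 : Matrix (Fin n) (Fin n) ℝ)) *ᵥ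
              (fun p : Fin N × Fin n => v p.1 t p.2))) ∧
      HasDerivAt
        (fun s => (1 / 2) * ∑ i, ((∑ j ∈ Finset.univ.erase i, Vp i j s)
          + m i * ∑ kk, (v i s kk) ^ 2)) D t ∧
      (∀ i₀ : Fin N, (∀ i, k i₀ ≤ k i) →
        D ≤ -(k i₀) * ((fun p : Fin N × Fin n => v p.1 t p.2) ⬝ᵥ
          (fun p : Fin N × Fin n => v p.1 t p.2))) ∧
      (D = 0 → ∀ i kk, v i t kk = 0) :=
  stmt_17_general N n m hm k hk w hw hwd hbal L hL v Vp f hfa hVdyn hdyn t
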